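/- arXiv:2111.08294 — 3 statements merged into one kernel-verified Lean document; each statement's English description precedes it below -/
import Mathlib

section
/- Assume that 𝒜 is closed, 𝒫 is closed, V₀ is lower semicontinuous, V₁ is anti-star shaped (V₁(λx) ≥ λV₁(x) for all λ ∈ [0,1] and all x ∈ ℝ^N) and upper semicontinuous, and that ℒ = {0}. Then the set 𝒞 is closed in 𝒳 × ℝ, the risk measure ρ is lower semicontinuous, and for every X ∈ 𝒳 with ρ(X) ∈ ℝ the infimum defining ρ(X) is attained: there exists x ∈ 𝒫 with X + V₁(x) ∈ 𝒜 and V₀(x) = ρ(X). -/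
open Topology Filter Set Pointwise

noncomputable section

/-- The asymptotic cone `C^∞` of a set `C` in a real topological vector space: the set of all
limits `z` of nets `l_α • c_α` with `c_α ∈ C`, `l_α ≥ 0`, `l_α → 0`, expressed via the standard
neighborhood characterization of net convergence. -/
def asymCone {E : Type*} [AddCommMonoid E] [SMul ℝ E] [TopologicalSpace E] (C : Set E) :
    Set E :=
  {z | ∀ U ∈ 𝓝 z, ∀ ε : ℝ, 0 < ε → ∃ c ∈ C, ∃ l : ℝ, 0 ≤ l ∧ l < ε ∧ l • c ∈ U}

/-- Epigraph of a real-valued function. -/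
def epigraph {E : Type*} (f : E → ℝ) : Set (E × ℝ) := {p | f p.1 ≤ p.2}

/-- The risk measure `ρ` associated to `(A, P, V₀, V₁)`, valued in the extended reals
(`sInf ∅ = ⊤`). -/
def riskM {X : Type*} [AddCommMonoid X] {N : ℕ} (A : Set X) (P : Set (Fin N → ℝ))
    (V₀ : (Fin N → ℝ) → ℝ) (V₁ : (Fin N → ℝ) → X) (Z : X) : EReal :=
  sInf ((fun x => ((V₀ x : ℝ) : EReal)) '' {x | x ∈ P ∧ Z + V₁ x ∈ A})

/-- The set `ℒ = {x ∈ 𝒫^∞ : V₀^∞(x) ≤ 0, V₁(x) ∈ 𝒜^∞}`.  Here `V₀^∞(x) ≤ 0` is expressed as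
`(x, 0)` belonging to the asymptotic cone of the epigraph of `V₀`, which is by definition the
epigraph of `V₀^∞`. -/
def Lset {X : Type*} [AddCommMonoid X] [SMul ℝ X] [TopologicalSpace X] {N : ℕ}
    (A : Set X) (P : Set (Fin N → ℝ)) (V₀ : (Fin N → ℝ) → ℝ) (V₁ : (Fin N → ℝ) → X) :
    Set (Fin N → ℝ) :=
  {x | x ∈ asymCone P ∧ (x, (0 : ℝ)) ∈ asymCone (epigraph V₀) ∧ V₁ x ∈ asymCone A}

/-- Upper semicontinuity of the liquidation rule `V₁` relative to the ordering cone `Xp`: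
for every `x` and every neighborhood `U` of `V₁ x` there is a neighborhood `W` of `x` with
`V₁(W) ⊆ U - Xp`. -/
def USCV1 {X : Type*} [AddCommGroup X] [TopologicalSpace X] {N : ℕ}
    (Xp : Set X) (V₁ : (Fin N → ℝ) → X) : Prop :=
  ∀ x : Fin N → ℝ, ∀ U ∈ 𝓝 (V₁ x), ∃ W ∈ 𝓝 x, ∀ y ∈ W, ∃ u ∈ U, ∃ p ∈ Xp, V₁ y = u - p

/-!
Along an ultrafilter converging to a point of the closure of `𝒞`, the witnessing portfolios
either converge, and closedness of `𝒫` and `𝒜` with the semicontinuity of `V₀` and `V₁` makes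
the limit a witness, or their norms blow up; then the normalized portfolios converge to a unit
vector which anti-star-shapedness of `V₁` places in `ℒ = {0}`, a contradiction. Since `𝒞` lies
between the strict epigraph and the epigraph of `ρ`, closedness of `𝒞` gives lower
semicontinuity of `ρ`, and attainment because `(Z, ρ Z)` is a limit of points of `𝒞`.
-/

section TendstoUpTo

variable {ι E : Type*} [AddCommGroup E] [TopologicalSpace E]
  {K C : Set E} {F : Filter ι} {f g : ι → E} {a b z : E}

/-- Convergence from below for the preorder of the cone `K`, as in `USCV1`. -/
def TendstoUpTo (K : Set E) (f : ι → E) (F : Filter ι) (z : E) : Prop :=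
  ∀ U ∈ 𝓝 z, ∀ᶠ i in F, ∃ p ∈ K, f i + p ∈ U

theorem TendstoUpTo.add_tendsto [ContinuousAdd E] (hf : TendstoUpTo K f F a)
    (hg : Tendsto g F (𝓝 b)) : TendstoUpTo K (fun i => g i + f i) F (b + a) := by
  intro U hU
  have hadd := tendsto_add.eventually_mem hU
  rw [nhds_prod_eq] at hadd
  obtain ⟨V, hV, W, hW, hVW⟩ := eventually_prod_iff.1 hadd
  filter_upwards [hg.eventually hV, hf _ hW] with i hgi ⟨p, hp, hfi⟩
  exact ⟨p, hp, by simpa only [add_assoc] using hVW hgi hfi⟩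

theorem TendstoUpTo.mem_of_isClosed [F.NeBot] (hf : TendstoUpTo K f F z) (hC : IsClosed C)
    (hCK : ∀ c ∈ C, ∀ p ∈ K, c + p ∈ C) (hfC : ∀ᶠ i in F, f i ∈ C) : z ∈ C := by
  refine hC.closure_subset (mem_closure_iff_nhds.2 fun U hU => ?_)
  obtain ⟨i, ⟨p, hp, hiU⟩, hiC⟩ := ((hf U hU).and hfC).exists
  exact ⟨f i + p, hiU, hCK _ hiC p hp⟩

theorem mem_asymCone_of_tendsto [Module ℝ E] [F.NeBot] {c : ι → E} {l : ι → ℝ}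
    (hl : Tendsto l F (𝓝 0)) (hl0 : ∀ᶠ i in F, 0 ≤ l i) (hc : ∀ᶠ i in F, c i ∈ C)
    (hz : Tendsto (fun i => l i • c i) F (𝓝 z)) : z ∈ asymCone C := by
  intro U hU ε hε
  obtain ⟨i, hcU, hci, hli, hlε⟩ :=
    ((hz.eventually_mem hU).and (hc.and (hl0.and (hl.eventually_lt_const hε)))).exists
  exact ⟨c i, hci, l i, hli, hlε, hcU⟩

theorem TendstoUpTo.mem_asymCone [Module ℝ E] [F.NeBot] {l : ι → ℝ}
    (hf : TendstoUpTo K f F z) (hK : ∀ c : ℝ, 0 ≤ c → ∀ p ∈ K, c • p ∈ K)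
    (hCK : ∀ c ∈ C, ∀ p ∈ K, c + p ∈ C) (hl : Tendsto l F (𝓝 0))
    (hlpos : ∀ᶠ i in F, 0 < l i) (hfC : ∀ᶠ i in F, (l i)⁻¹ • f i ∈ C) : z ∈ asymCone C := by
  intro U hU ε hε
  obtain ⟨i, ⟨p, hp, hiU⟩, hiC, hli, hlε⟩ :=
    ((hf U hU).and (hfC.and (hlpos.and (hl.eventually_lt_const hε)))).exists
  refine ⟨(l i)⁻¹ • (f i + p), ?_, l i, hli.le, hlε, by rwa [smul_inv_smul₀ hli.ne']⟩
  rw [smul_add]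
  exact hCK _ hiC _ (hK _ (inv_nonneg.2 hli.le) p hp)

end TendstoUpTo

section Compactness

variable {ι E : Type*} [NormedAddCommGroup E] [ProperSpace E]

theorem Ultrafilter.exists_tendsto_or_tendsto_norm_atTop (𝒰 : Ultrafilter ι) (f : ι → E) :
    (∃ x, Tendsto f 𝒰 (𝓝 x)) ∨ Tendsto (fun i => ‖f i‖) 𝒰 atTop := by
  by_cases hbdd : ∃ R, ∀ᶠ i in 𝒰, ‖f i‖ ≤ R
  · obtain ⟨R, hR⟩ := hbdd
    have hball : ↑(𝒰.map f) ≤ 𝓟 (Metric.closedBall (0 : E) R) :=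
      le_principal_iff.2 (hR.mono fun i hi => mem_closedBall_zero_iff.2 hi)
    obtain ⟨x, -, hx⟩ := (isCompact_closedBall 0 R).ultrafilter_le_nhds _ hball
    exact Or.inl ⟨x, hx⟩
  · push Not at hbdd
    exact Or.inr (tendsto_atTop.2 fun R => (hbdd R).mono fun i hi => hi.le)

theorem Ultrafilter.exists_tendsto_inv_norm_smul [NormedSpace ℝ E] {𝒰 : Ultrafilter ι} {f : ι → E}
    (hf : Tendsto (fun i => ‖f i‖) 𝒰 atTop) :
    ∃ u, ‖u‖ = 1 ∧ Tendsto (fun i => ‖f i‖⁻¹ • f i) 𝒰 (𝓝 u) := by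
  have hsphere : ↑(𝒰.map fun i => ‖f i‖⁻¹ • f i) ≤ 𝓟 (Metric.sphere (0 : E) 1) := by
    refine le_principal_iff.2 ((hf.eventually_gt_atTop 0).mono fun i hi => ?_)
    exact mem_sphere_zero_iff_norm.2 (norm_smul_inv_norm (norm_pos_iff.1 hi))
  obtain ⟨u, hu, hlim⟩ := (isCompact_sphere 0 1).ultrafilter_le_nhds _ hsphere
  exact ⟨u, mem_sphere_zero_iff_norm.1 hu, hlim⟩

end Compactness

section RiskMeasure

variable {X : Type*} [AddCommMonoid X] {N : ℕ} {A : Set X} {P : Set (Fin N → ℝ)}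
  {V₀ : (Fin N → ℝ) → ℝ} {V₁ : (Fin N → ℝ) → X} {Z : X} {x : Fin N → ℝ} {c : ℝ}

/-- The set `𝒞`. -/
def hedgeSet (A : Set X) (P : Set (Fin N → ℝ)) (V₀ : (Fin N → ℝ) → ℝ)
    (V₁ : (Fin N → ℝ) → X) : Set (X × ℝ) :=
  {p | ∃ x ∈ P, V₀ x ≤ p.2 ∧ p.1 + V₁ x ∈ A}

theorem riskM_le (hx : x ∈ P) (hA : Z + V₁ x ∈ A) : riskM A P V₀ V₁ Z ≤ V₀ x :=
  sInf_le ⟨x, ⟨hx, hA⟩, rfl⟩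

theorem mem_hedgeSet_of_riskM_lt (h : riskM A P V₀ V₁ Z < c) : (Z, c) ∈ hedgeSet A P V₀ V₁ := by
  obtain ⟨_, ⟨x, ⟨hx, hA⟩, rfl⟩, hlt⟩ := sInf_lt_iff.1 h
  exact ⟨x, hx, (EReal.coe_lt_coe_iff.1 hlt).le, hA⟩

theorem riskM_le_of_mem_hedgeSet (h : (Z, c) ∈ hedgeSet A P V₀ V₁) : riskM A P V₀ V₁ Z ≤ c := by
  obtain ⟨x, hx, hxc, hA⟩ := h
  exact (riskM_le hx hA).trans (EReal.coe_le_coe_iff.2 hxc)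

variable [TopologicalSpace X]

theorem lowerSemicontinuous_riskM (hC : IsClosed (hedgeSet A P V₀ V₁)) :
    LowerSemicontinuous (riskM A P V₀ V₁) := by
  intro Z y hy
  obtain ⟨c, hyc, hc⟩ := EReal.exists_between_coe_real hy
  have hZc : (Z, c) ∉ hedgeSet A P V₀ V₁ := fun h => (riskM_le_of_mem_hedgeSet h).not_gt hc
  filter_upwards [(Continuous.prodMk_left c).continuousAt (hC.isOpen_compl.mem_nhds hZc)]
    with Z' hZ'
  exact hyc.trans_le (not_lt.1 fun h => hZ' (mem_hedgeSet_of_riskM_lt h))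

theorem exists_riskM_eq (hC : IsClosed (hedgeSet A P V₀ V₁)) (hbot : riskM A P V₀ V₁ Z ≠ ⊥)
    (htop : riskM A P V₀ V₁ Z ≠ ⊤) :
    ∃ x ∈ P, Z + V₁ x ∈ A ∧ ((V₀ x : ℝ) : EReal) = riskM A P V₀ V₁ Z := by
  set r := (riskM A P V₀ V₁ Z).toReal
  have hr : (r : EReal) = riskM A P V₀ V₁ Z := EReal.coe_toReal htop hbot
  have hlim : Tendsto (fun c : ℝ => (Z, c)) (𝓝[>] r) (𝓝 (Z, r)) :=
    ((Continuous.prodMk_right Z).tendsto r).mono_left nhdsWithin_le_nhds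
  have hZr : (Z, r) ∈ hedgeSet A P V₀ V₁ :=
    hC.mem_of_tendsto hlim (eventually_nhdsWithin_of_forall fun c (hc : r < c) =>
      mem_hedgeSet_of_riskM_lt (hr ▸ EReal.coe_lt_coe_iff.2 hc))
  obtain ⟨x, hx, hxr, hA⟩ := hZr
  exact ⟨x, hx, hA, le_antisymm (hr ▸ EReal.coe_le_coe_iff.2 hxr) (riskM_le hx hA)⟩

end RiskMeasure

section Market

variable {X : Type*} [AddCommGroup X] [TopologicalSpace X] {N : ℕ}
  {Xp A : Set X} {P : Set (Fin N → ℝ)} {V₀ : (Fin N → ℝ) → ℝ} {V₁ : (Fin N → ℝ) → X}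
  {ι : Type*} {F : Filter ι} {x : ι → Fin N → ℝ} {Z : ι → X} {m : ι → ℝ}
  {x₀ : Fin N → ℝ} {Z₀ : X} {m₀ : ℝ}

theorem USCV1.tendstoUpTo (hV₁ : USCV1 Xp V₁) (hx : Tendsto x F (𝓝 x₀)) :
    TendstoUpTo Xp (fun i => V₁ (x i)) F (V₁ x₀) := by
  intro U hU
  obtain ⟨W, hW, hWU⟩ := hV₁ x₀ U hU
  filter_upwards [hx hW] with i hi
  obtain ⟨u, hu, p, hp, hup⟩ := hWU (x i) hi
  exact ⟨p, hp, by rwa [hup, sub_add_cancel]⟩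

theorem hedge_of_tendsto [ContinuousAdd X] [F.NeBot] (hAcl : IsClosed A) (hPcl : IsClosed P)
    (hAmono : ∀ a ∈ A, ∀ p ∈ Xp, a + p ∈ A) (hV₀ : LowerSemicontinuous V₀)
    (hV₁ : USCV1 Xp V₁) (hx : Tendsto x F (𝓝 x₀)) (hZ : Tendsto Z F (𝓝 Z₀))
    (hm : Tendsto m F (𝓝 m₀))
    (hedge : ∀ᶠ i in F, x i ∈ P ∧ V₀ (x i) ≤ m i ∧ Z i + V₁ (x i) ∈ A) :
    x₀ ∈ P ∧ V₀ x₀ ≤ m₀ ∧ Z₀ + V₁ x₀ ∈ A :=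
  ⟨hPcl.mem_of_tendsto hx (hedge.mono fun _ h => h.1),
    hV₀.isClosed_epigraph.mem_of_tendsto (hx.prodMk_nhds hm) (hedge.mono fun _ h => h.2.1),
    ((hV₁.tendstoUpTo hx).add_tendsto hZ).mem_of_isClosed hAcl hAmono
      (hedge.mono fun _ h => h.2.2)⟩

/-- Anti-star-shapedness gives `l • V₁ x ≤ V₁ (l • x)`, so rescaled positions
`l • (Z + V₁ x)` are dominated by `l • Z + V₁ (l • x)`, which converges from below to
`V₁ u` by upper semicontinuity. -/
theorem mem_Lset_of_tendsto [Module ℝ X] [ContinuousAdd X] [ContinuousSMul ℝ X] [F.NeBot]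
    {l : ι → ℝ} {u : Fin N → ℝ}
    (hXp : ∀ c : ℝ, 0 ≤ c → ∀ p ∈ Xp, c • p ∈ Xp) (hAmono : ∀ a ∈ A, ∀ p ∈ Xp, a + p ∈ A)
    (hV₁anti : ∀ l : ℝ, 0 ≤ l → l ≤ 1 → ∀ x, V₁ (l • x) - l • V₁ x ∈ Xp)
    (hV₁ : USCV1 Xp V₁) (hZ : Tendsto Z F (𝓝 Z₀)) (hm : Tendsto m F (𝓝 m₀))
    (hl : Tendsto l F (𝓝 0)) (hlpos : ∀ᶠ i in F, 0 < l i)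
    (hu : Tendsto (fun i => l i • x i) F (𝓝 u))
    (hedge : ∀ᶠ i in F, x i ∈ P ∧ V₀ (x i) ≤ m i ∧ Z i + V₁ (x i) ∈ A) :
    u ∈ Lset A P V₀ V₁ := by
  have hl0 : ∀ᶠ i in F, 0 ≤ l i := hlpos.mono fun _ h => h.le
  refine ⟨mem_asymCone_of_tendsto hl hl0 (hedge.mono fun _ h => h.1) hu,
    mem_asymCone_of_tendsto (c := fun i => (x i, m i)) hl hl0 (hedge.mono fun _ h => h.2.1) ?_,
    ?_⟩
  · simpa only [Prod.smul_mk, smul_eq_mul, zero_mul] using hu.prodMk_nhds (hl.mul hm)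
  · have hlim : TendstoUpTo Xp (fun i => l i • Z i + V₁ (l i • x i)) F (V₁ u) := by
      simpa only [zero_smul, zero_add] using (hV₁.tendstoUpTo hu).add_tendsto (hl.smul hZ)
    refine hlim.mem_asymCone hXp hAmono hl hlpos ?_
    filter_upwards [hedge, hlpos, hl.eventually_le_const one_pos] with i hi hli hl1
    have hq := hXp _ (inv_nonneg.2 hli.le) _ (hV₁anti (l i) hli.le hl1 (x i))
    convert hAmono _ hi.2.2 _ hq using 1
    rw [smul_add, inv_smul_smul₀ hli.ne', smul_sub, inv_smul_smul₀ hli.ne']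
    abel

theorem isClosed_hedgeSet [Module ℝ X] [ContinuousAdd X] [ContinuousSMul ℝ X]
    (hXp : ∀ c : ℝ, 0 ≤ c → ∀ p ∈ Xp, c • p ∈ Xp) (hAmono : ∀ a ∈ A, ∀ p ∈ Xp, a + p ∈ A)
    (hAcl : IsClosed A) (hPcl : IsClosed P) (hV₀ : LowerSemicontinuous V₀)
    (hV₁anti : ∀ l : ℝ, 0 ≤ l → l ≤ 1 → ∀ x, V₁ (l • x) - l • V₁ x ∈ Xp)
    (hV₁ : USCV1 Xp V₁) (hL : Lset A P V₀ V₁ ⊆ {0}) : IsClosed (hedgeSet A P V₀ V₁) := by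
  refine isClosed_iff_ultrafilter.2 fun q 𝒰 hq hC => ?_
  choose! w hw using fun (p : X × ℝ) (hp : p ∈ hedgeSet A P V₀ V₁) => hp
  have hedge : ∀ᶠ p in 𝒰, w p ∈ P ∧ V₀ (w p) ≤ p.2 ∧ p.1 + V₁ (w p) ∈ A :=
    mem_of_superset hC hw
  have hZ := (continuous_fst.tendsto q).mono_left hq
  have hm := (continuous_snd.tendsto q).mono_left hq
  rcases 𝒰.exists_tendsto_or_tendsto_norm_atTop w with ⟨x₀, hx⟩ | hnorm
  · exact ⟨x₀, hedge_of_tendsto hAcl hPcl hAmono hV₀ hV₁ hx hZ hm hedge⟩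
  · obtain ⟨u, hu1, hu⟩ := Ultrafilter.exists_tendsto_inv_norm_smul hnorm
    have hu0 : u = 0 := hL (mem_Lset_of_tendsto hXp hAmono hV₁anti hV₁ hZ hm
      (tendsto_inv_atTop_zero.comp hnorm)
      ((hnorm.eventually_gt_atTop 0).mono fun _ h => inv_pos.2 h) hu hedge)
    simp [hu0] at hu1

end Market

theorem stmt1_general
    {X : Type*} [AddCommGroup X] [Module ℝ X] [TopologicalSpace X]
    [IsTopologicalAddGroup X] [ContinuousSMul ℝ X]
    (Xp : Set X) (hXp_cone : ∀ c : ℝ, 0 ≤ c → ∀ z ∈ Xp, c • z ∈ Xp)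
    {N : ℕ} (P : Set (Fin N → ℝ)) (V₀ : (Fin N → ℝ) → ℝ) (V₁ : (Fin N → ℝ) → X)
    (A : Set X) (hAmono : ∀ a ∈ A, ∀ p ∈ Xp, a + p ∈ A)
    (hAcl : IsClosed A) (hPcl : IsClosed P)
    (hV₀lsc : LowerSemicontinuous V₀)
    (hV₁anti : ∀ l : ℝ, 0 ≤ l → l ≤ 1 → ∀ x, V₁ (l • x) - l • V₁ x ∈ Xp)
    (hV₁usc : USCV1 Xp V₁)
    (hL0 : Lset A P V₀ V₁ = {0}) :
    IsClosed {p : X × ℝ | ∃ x ∈ P, V₀ x ≤ p.2 ∧ p.1 + V₁ x ∈ A} ∧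
    LowerSemicontinuous (riskM A P V₀ V₁) ∧
    ∀ Z : X, riskM A P V₀ V₁ Z ≠ ⊥ → riskM A P V₀ V₁ Z ≠ ⊤ →
      ∃ x ∈ P, Z + V₁ x ∈ A ∧ ((V₀ x : ℝ) : EReal) = riskM A P V₀ V₁ Z := by
  have hC : IsClosed (hedgeSet A P V₀ V₁) :=
    isClosed_hedgeSet hXp_cone hAmono hAcl hPcl hV₀lsc hV₁anti hV₁usc hL0.subset
  exact ⟨hC, lowerSemicontinuous_riskM hC, fun Z => exists_riskM_eq hC⟩

theorem stmt1
    {X : Type*} [AddCommGroup X] [Module ℝ X] [TopologicalSpace X]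
    [IsTopologicalAddGroup X] [ContinuousSMul ℝ X]
    (Xp : Set X) (hXp_cone : ∀ c : ℝ, 0 ≤ c → ∀ z ∈ Xp, c • z ∈ Xp)
    (hXp_conv : Convex ℝ Xp)
    {N : ℕ} (hN : 1 ≤ N)
    (P : Set (Fin N → ℝ)) (hP0 : (0 : Fin N → ℝ) ∈ P)
    (V₀ : (Fin N → ℝ) → ℝ) (hV₀0 : V₀ 0 = 0) (hV₀sp : ∀ x, -V₀ (-x) ≤ V₀ x)
    (V₁ : (Fin N → ℝ) → X) (hV₁0 : V₁ 0 = 0) (hV₁sp : ∀ x, -V₁ (-x) - V₁ x ∈ Xp)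
    (A : Set X) (hA0 : (0 : X) ∈ A) (hAmono : ∀ a ∈ A, ∀ p ∈ Xp, a + p ∈ A)
    (hAcl : IsClosed A) (hPcl : IsClosed P)
    (hV₀lsc : LowerSemicontinuous V₀)
    (hV₁anti : ∀ l : ℝ, 0 ≤ l → l ≤ 1 → ∀ x, V₁ (l • x) - l • V₁ x ∈ Xp)
    (hV₁usc : USCV1 Xp V₁)
    (hL0 : Lset A P V₀ V₁ = {0}) :
    IsClosed {p : X × ℝ | ∃ x ∈ P, V₀ x ≤ p.2 ∧ p.1 + V₁ x ∈ A} ∧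
    LowerSemicontinuous (riskM A P V₀ V₁) ∧
    ∀ Z : X, riskM A P V₀ V₁ Z ≠ ⊥ → riskM A P V₀ V₁ Z ≠ ⊤ →
      ∃ x ∈ P, Z + V₁ x ∈ A ∧ ((V₀ x : ℝ) : EReal) = riskM A P V₀ V₁ Z :=
  stmt1_general Xp hXp_cone P V₀ V₁ A hAmono hAcl hPcl hV₀lsc hV₁anti hV₁usc hL0
end
end

section
/- If 𝒜 and 𝒫 are convex, V₀ is convex, and V₁ is concave (V₁(λx + (1−λ)y) ≥ λV₁(x) + (1−λ)V₁(y) for all λ ∈ [0,1] and x, y), then ρ is convex: for all λ ∈ (0,1) and all X, Y ∈ 𝒳 such that {ρ(X), ρ(Y)} ≠ {−∞, +∞}, one has ρ(λX + (1−λ)Y) ≤ λρ(X) + (1−λ)ρ(Y) in the extended reals. -/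
open Topology Filter Set Pointwise

noncomputable section

/-! If `x` is feasible for `Z` and `y` for `W`, then by convexity of `𝒫` and `𝒜`, concavity of
`V₁` and monotonicity of `𝒜`, the portfolio `l • x + (1 - l) • y` is feasible for
`l • Z + (1 - l) • W`, at a cost of at most `l * V₀ x + (1 - l) * V₀ y` by convexity of `V₀`.
Taking infima over `x` and `y` gives the inequality; the excluded pairs `{⊥, ⊤}` are exactly
those where `⊥ + ⊤ = ⊥` in `EReal` would make the right-hand side meaningless. -/

namespace EReal

lemma coe_mul_eq_bot_iff {s : ℝ} (hs : 0 < s) {f : EReal} : (s : EReal) * f = ⊥ ↔ f = ⊥ := by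
  simp [mul_eq_bot, hs, hs.not_gt]

lemma coe_mul_eq_top_iff {s : ℝ} (hs : 0 < s) {f : EReal} : (s : EReal) * f = ⊤ ↔ f = ⊤ := by
  simp [mul_eq_top, hs, hs.not_gt]

lemma lt_coe_div_iff {s : ℝ} (hs : 0 < s) {f : EReal} {a : ℝ} :
    f < ((a / s : ℝ) : EReal) ↔ (s : EReal) * f < a := by
  rw [coe_div, lt_div_iff (by exact_mod_cast hs) (coe_ne_top s), mul_comm]

lemma le_coe_mul_add_coe_mul_of_forall_gt {f g c : EReal} {s t : ℝ} (hs : 0 < s) (ht : 0 < t)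
    (h₁ : f ≠ ⊥ ∨ g ≠ ⊤) (h₂ : f ≠ ⊤ ∨ g ≠ ⊥)
    (h : ∀ a b : ℝ, f < a → g < b → c ≤ ((s * a + t * b : ℝ) : EReal)) :
    c ≤ s * f + t * g := by
  refine le_add_of_forall_gt
    (by rwa [Ne, Ne, coe_mul_eq_bot_iff hs, coe_mul_eq_top_iff ht])
    (by rwa [Ne, Ne, coe_mul_eq_top_iff hs, coe_mul_eq_bot_iff ht]) fun a' ha' b' hb' => ?_
  induction a' using EReal.rec with
  | bot => exact absurd ha' not_lt_bot
  | top => rw [top_add_of_ne_bot (ne_bot_of_gt hb')]; exact le_top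
  | coe a =>
    induction b' using EReal.rec with
    | bot => exact absurd hb' not_lt_bot
    | top => rw [add_top_of_ne_bot (coe_ne_bot a)]; exact le_top
    | coe b =>
      have hab := h (a / s) (b / t) ((lt_coe_div_iff hs).2 ha') ((lt_coe_div_iff ht).2 hb')
      rwa [mul_div_cancel₀ a hs.ne', mul_div_cancel₀ b ht.ne', coe_add] at hab

end EReal

section RiskMeasure

variable {X : Type*} {N : ℕ} {A : Set X} {P : Set (Fin N → ℝ)} {V₀ : (Fin N → ℝ) → ℝ}
  {V₁ : (Fin N → ℝ) → X}

lemma riskM_le_of_mem [AddCommMonoid X] {Z : X} {x : Fin N → ℝ} (hxP : x ∈ P)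
    (hxA : Z + V₁ x ∈ A) :
    riskM A P V₀ V₁ Z ≤ V₀ x :=
  sInf_le ⟨x, ⟨hxP, hxA⟩, rfl⟩

lemma riskM_lt_iff [AddCommMonoid X] {Z : X} {b : EReal} :
    riskM A P V₀ V₁ Z < b ↔ ∃ x ∈ P, Z + V₁ x ∈ A ∧ (V₀ x : EReal) < b := by
  simp [riskM, sInf_lt_iff, and_assoc]

lemma riskM_convexComb_le [AddCommGroup X] [Module ℝ X] (Xp : Set X)
    (hAmono : ∀ a ∈ A, ∀ p ∈ Xp, a + p ∈ A) (hAconv : Convex ℝ A) (hPconv : Convex ℝ P)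
    (hV₀conv : ConvexOn ℝ Set.univ V₀)
    (hV₁conc : ∀ l : ℝ, 0 ≤ l → l ≤ 1 → ∀ x y,
      V₁ (l • x + (1 - l) • y) - (l • V₁ x + (1 - l) • V₁ y) ∈ Xp)
    {l : ℝ} (hl0 : 0 ≤ l) (hl1 : l ≤ 1) {Z W : X} {x y : Fin N → ℝ}
    (hxP : x ∈ P) (hxA : Z + V₁ x ∈ A) (hyP : y ∈ P) (hyA : W + V₁ y ∈ A) :
    riskM A P V₀ V₁ (l • Z + (1 - l) • W) ≤ ((l * V₀ x + (1 - l) * V₀ y : ℝ) : EReal) := by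
  have hl1' : 0 ≤ 1 - l := sub_nonneg.2 hl1
  have hcombA : l • (Z + V₁ x) + (1 - l) • (W + V₁ y) ∈ A :=
    hAconv hxA hyA hl0 hl1' (by ring)
  have hA : (l • Z + (1 - l) • W) + V₁ (l • x + (1 - l) • y) ∈ A := by
    convert hAmono _ hcombA _ (hV₁conc l hl0 hl1 x y) using 1
    module
  calc riskM A P V₀ V₁ (l • Z + (1 - l) • W)
      ≤ V₀ (l • x + (1 - l) • y) := riskM_le_of_mem (hPconv hxP hyP hl0 hl1' (by ring)) hA
    _ ≤ ((l * V₀ x + (1 - l) * V₀ y : ℝ) : EReal) := EReal.coe_le_coe_iff.2 <|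
        hV₀conv.2 (Set.mem_univ x) (Set.mem_univ y) hl0 hl1' (by ring)

end RiskMeasure

theorem stmt13_general
    {X : Type*} [AddCommGroup X] [Module ℝ X]
    (Xp : Set X)
    {N : ℕ}
    (P : Set (Fin N → ℝ))
    (V₀ : (Fin N → ℝ) → ℝ)
    (V₁ : (Fin N → ℝ) → X)
    (A : Set X) (hAmono : ∀ a ∈ A, ∀ p ∈ Xp, a + p ∈ A)
    (hAconv : Convex ℝ A) (hPconv : Convex ℝ P)
    (hV₀conv : ConvexOn ℝ Set.univ V₀)
    (hV₁conc : ∀ l : ℝ, 0 ≤ l → l ≤ 1 → ∀ x y,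
      V₁ (l • x + (1 - l) • y) - (l • V₁ x + (1 - l) • V₁ y) ∈ Xp) :
    ∀ l : ℝ, 0 < l → l < 1 → ∀ Z W : X,
      ¬(riskM A P V₀ V₁ Z = ⊥ ∧ riskM A P V₀ V₁ W = ⊤) →
      ¬(riskM A P V₀ V₁ Z = ⊤ ∧ riskM A P V₀ V₁ W = ⊥) →
      riskM A P V₀ V₁ (l • Z + (1 - l) • W) ≤
        (l : EReal) * riskM A P V₀ V₁ Z + ((1 - l : ℝ) : EReal) * riskM A P V₀ V₁ W := by
  intro l hl0 hl1 Z W hbotTop htopBot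
  refine EReal.le_coe_mul_add_coe_mul_of_forall_gt hl0 (sub_pos.2 hl1)
    (not_and_or.1 hbotTop) (not_and_or.1 htopBot) fun a b ha hb => ?_
  obtain ⟨x, hxP, hxA, hxa⟩ := riskM_lt_iff.1 ha
  obtain ⟨y, hyP, hyA, hyb⟩ := riskM_lt_iff.1 hb
  refine (riskM_convexComb_le Xp hAmono hAconv hPconv hV₀conv hV₁conc hl0.le hl1.le
    hxP hxA hyP hyA).trans (EReal.coe_le_coe_iff.2 ?_)
  have hxa' : V₀ x < a := EReal.coe_lt_coe_iff.1 hxa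
  have hyb' : V₀ y < b := EReal.coe_lt_coe_iff.1 hyb
  gcongr

theorem stmt13
    {X : Type*} [AddCommGroup X] [Module ℝ X] [TopologicalSpace X]
    [IsTopologicalAddGroup X] [ContinuousSMul ℝ X]
    (Xp : Set X) (hXp_cone : ∀ c : ℝ, 0 ≤ c → ∀ z ∈ Xp, c • z ∈ Xp)
    (hXp_conv : Convex ℝ Xp)
    {N : ℕ} (hN : 1 ≤ N)
    (P : Set (Fin N → ℝ)) (hP0 : (0 : Fin N → ℝ) ∈ P)
    (V₀ : (Fin N → ℝ) → ℝ) (hV₀0 : V₀ 0 = 0) (hV₀sp : ∀ x, -V₀ (-x) ≤ V₀ x)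
    (V₁ : (Fin N → ℝ) → X) (hV₁0 : V₁ 0 = 0) (hV₁sp : ∀ x, -V₁ (-x) - V₁ x ∈ Xp)
    (A : Set X) (hA0 : (0 : X) ∈ A) (hAmono : ∀ a ∈ A, ∀ p ∈ Xp, a + p ∈ A)
    (hAconv : Convex ℝ A) (hPconv : Convex ℝ P)
    (hV₀conv : ConvexOn ℝ Set.univ V₀)
    (hV₁conc : ∀ l : ℝ, 0 ≤ l → l ≤ 1 → ∀ x y,
      V₁ (l • x + (1 - l) • y) - (l • V₁ x + (1 - l) • V₁ y) ∈ Xp) :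
    ∀ l : ℝ, 0 < l → l < 1 → ∀ Z W : X,
      ¬(riskM A P V₀ V₁ Z = ⊥ ∧ riskM A P V₀ V₁ W = ⊤) →
      ¬(riskM A P V₀ V₁ Z = ⊤ ∧ riskM A P V₀ V₁ W = ⊥) →
      riskM A P V₀ V₁ (l • Z + (1 - l) • W) ≤
        (l : EReal) * riskM A P V₀ V₁ Z + ((1 - l : ℝ) : EReal) * riskM A P V₀ V₁ W :=
  stmt13_general Xp P V₀ V₁ A hAmono hAconv hPconv hV₀conv hV₁conc
end
end

section
/- Let z ∈ 𝒫 be such that 𝒫 + span({z}) ⊆ 𝒫, suppose V₀ and V₁ are additive along z (V₀(x + λz) = V₀(x) + λV₀(z) and V₁(x + λz) = V₁(x) + λV₁(z) for every x ∈ 𝒫 and λ ∈ ℝ), and assume V₀(z) > 0. Define 𝒱 = {V₁(x) : x ∈ 𝒫, V₀(x) = 0}. Then for every X ∈ 𝒳, ρ(X) = inf{λV₀(z) : λ ∈ ℝ, X + λV₁(z) ∈ 𝒜 − 𝒱}, where 𝒜 − 𝒱 = {A − W : A ∈ 𝒜, W ∈ 𝒱}. -/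
/-! Translating a portfolio along `z` changes its price linearly, so every acceptable portfolio `x`
splits as `x' + t • z` with `t = V₀ x / V₀ z` and `x' = x - t • z` costless; conversely a costless
`x'` together with a multiple `t • z` recombines into an acceptable portfolio of price `t * V₀ z`.
Hence both infima run over the same set of prices. -/

open Topology Filter Set Pointwise

noncomputable section

section
variable {E X : Type*} [AddCommGroup E] [Module ℝ E] [AddCommGroup X] [Module ℝ X]
  {P : Set E} {V₀ : E → ℝ} {V₁ : E → X} {A : Set X} {z : E}

lemma add_smul_mem_of_add_span_subset (hPz : P + (Submodule.span ℝ {z} : Set E) ⊆ P)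
    {x : E} (hx : x ∈ P) (t : ℝ) : x + t • z ∈ P :=
  hPz (add_mem_add hx (Submodule.smul_mem _ t (Submodule.mem_span_singleton_self z)))

lemma image_price_acceptable_eq (hPz : P + (Submodule.span ℝ {z} : Set E) ⊆ P)
    (hV₀add : ∀ x ∈ P, ∀ t : ℝ, V₀ (x + t • z) = V₀ x + t * V₀ z)
    (hV₁add : ∀ x ∈ P, ∀ t : ℝ, V₁ (x + t • z) = V₁ x + t • V₁ z)
    (hz0 : V₀ z ≠ 0) (Z : X) :
    V₀ '' {x | x ∈ P ∧ Z + V₁ x ∈ A} =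
      (fun t : ℝ => t * V₀ z) ''
        {t : ℝ | ∃ a ∈ A, ∃ x ∈ P, V₀ x = 0 ∧ Z + t • V₁ z = a - V₁ x} := by
  ext v
  constructor
  · rintro ⟨x, ⟨hxP, hxA⟩, rfl⟩
    set t := V₀ x / V₀ z
    refine ⟨t, ⟨Z + V₁ x, hxA, x + (-t) • z, add_smul_mem_of_add_span_subset hPz hxP _, ?_, ?_⟩,
      div_mul_cancel₀ _ hz0⟩
    · rw [hV₀add x hxP, neg_mul, div_mul_cancel₀ _ hz0, add_neg_cancel]
    · rw [hV₁add x hxP, neg_smul]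
      abel
  · rintro ⟨t, ⟨a, haA, x, hxP, hx0, heq⟩, rfl⟩
    refine ⟨x + t • z, ⟨add_smul_mem_of_add_span_subset hPz hxP t, ?_⟩, ?_⟩
    · rwa [hV₁add x hxP, add_comm (V₁ x), ← add_assoc, eq_sub_iff_add_eq.mp heq]
    · rw [hV₀add x hxP, hx0, zero_add]

end

theorem stmt17_general
    {X : Type*} [AddCommGroup X] [Module ℝ X]
    {N : ℕ}
    (P : Set (Fin N → ℝ))
    (V₀ : (Fin N → ℝ) → ℝ)
    (V₁ : (Fin N → ℝ) → X)
    (A : Set X)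
    (z : Fin N → ℝ)
    (hPz : P + ((Submodule.span ℝ {z} : Submodule ℝ (Fin N → ℝ)) : Set (Fin N → ℝ)) ⊆ P)
    (hV₀add : ∀ x ∈ P, ∀ t : ℝ, V₀ (x + t • z) = V₀ x + t * V₀ z)
    (hV₁add : ∀ x ∈ P, ∀ t : ℝ, V₁ (x + t • z) = V₁ x + t • V₁ z)
    (hz0 : 0 < V₀ z) :
    ∀ Z : X, riskM A P V₀ V₁ Z =
      sInf ((fun t : ℝ => ((t * V₀ z : ℝ) : EReal)) ''
        {t : ℝ | ∃ a ∈ A, ∃ x ∈ P, V₀ x = 0 ∧ Z + t • V₁ z = a - V₁ x}) := by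
  intro Z
  have h := congrArg (fun S : Set ℝ => sInf (((↑) : ℝ → EReal) '' S))
    (image_price_acceptable_eq (A := A) hPz hV₀add hV₁add hz0.ne' Z)
  simpa only [riskM, image_image] using h

theorem stmt17
    {X : Type*} [AddCommGroup X] [Module ℝ X] [TopologicalSpace X]
    [IsTopologicalAddGroup X] [ContinuousSMul ℝ X]
    (Xp : Set X) (hXp_cone : ∀ c : ℝ, 0 ≤ c → ∀ z ∈ Xp, c • z ∈ Xp)
    (hXp_conv : Convex ℝ Xp)
    {N : ℕ} (hN : 1 ≤ N)
    (P : Set (Fin N → ℝ)) (hP0 : (0 : Fin N → ℝ) ∈ P)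
    (V₀ : (Fin N → ℝ) → ℝ) (hV₀0 : V₀ 0 = 0) (hV₀sp : ∀ x, -V₀ (-x) ≤ V₀ x)
    (V₁ : (Fin N → ℝ) → X) (hV₁0 : V₁ 0 = 0) (hV₁sp : ∀ x, -V₁ (-x) - V₁ x ∈ Xp)
    (A : Set X) (hA0 : (0 : X) ∈ A) (hAmono : ∀ a ∈ A, ∀ p ∈ Xp, a + p ∈ A)
    (z : Fin N → ℝ) (hz : z ∈ P)
    (hPz : P + ((Submodule.span ℝ {z} : Submodule ℝ (Fin N → ℝ)) : Set (Fin N → ℝ)) ⊆ P)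
    (hV₀add : ∀ x ∈ P, ∀ t : ℝ, V₀ (x + t • z) = V₀ x + t * V₀ z)
    (hV₁add : ∀ x ∈ P, ∀ t : ℝ, V₁ (x + t • z) = V₁ x + t • V₁ z)
    (hz0 : 0 < V₀ z) :
    ∀ Z : X, riskM A P V₀ V₁ Z =
      sInf ((fun t : ℝ => ((t * V₀ z : ℝ) : EReal)) ''
        {t : ℝ | ∃ a ∈ A, ∃ x ∈ P, V₀ x = 0 ∧ Z + t • V₁ z = a - V₁ x}) :=
  stmt17_general P V₀ V₁ A z hPz hV₀add hV₁add hz0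
end
end
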